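/- arXiv:2512.22805 — 3 statements merged into one kernel-verified Lean document; each statement's English description precedes it below -/
import Mathlib

section
/- Let G be a graph containing a triangle u–v–w with d(u) = 2 and d(v) = 3, and let L be a list assignment with |L(z)| = d(z) + 2 for all z. Then any proper conflict-free L-coloring of G − u extends to a proper conflict-free L-coloring of G, provided w is not isolated in G − u. -/
/-- A proper conflict-free coloring of `G`. -/
def IsPCF {V β : Type*} (G : SimpleGraph V) (φ : V → β) : Prop :=
  (∀ ⦃a b : V⦄, G.Adj a b → φ a ≠ φ b) ∧
  ∀ v : V, (∃ u, G.Adj v u) → ∃ c : β, ∃! u : V, G.Adj v u ∧ φ u = c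

/-- A proper conflict-free coloring from the lists `L`. -/
def IsPCFList {V : Type*} (G : SimpleGraph V) (L : V → Finset ℕ) (φ : V → ℕ) : Prop :=
  (∀ v, φ v ∈ L v) ∧ IsPCF G φ

/-- The graph obtained from `G` by deleting the vertices in `S`
(kept on the same vertex type; deleted vertices become isolated). -/
def delVerts {V : Type*} (G : SimpleGraph V) (S : Set V) : SimpleGraph V where
  Adj a b := G.Adj a b ∧ a ∉ S ∧ b ∉ S
  symm := by
    constructor
    intro a b h
    exact ⟨h.1.symm, h.2.2, h.2.1⟩
  loopless := by
    constructor
    intro a h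
    exact G.irrefl h.1

/-- `Uset G φ v` is the set of colors appearing exactly once in the open
neighborhood of `v` in `G` under the coloring `φ`. -/
def Uset {V : Type*} (G : SimpleGraph V) (φ : V → ℕ) (v : V) : Set ℕ :=
  {c | ∃! u : V, G.Adj v u ∧ φ u = c}

/-!
Colour `u` by a colour `c ∈ L(u)` different from `φ(v)`, `φ(w)` and from a colour `c_w` occurring
exactly once around `w` in `G - u`; this is possible since `|L(u)| = 4`. Only `u` and its
neighbours `v`, `w` see the new colour. Around `w`, the colour `c_w` still occurs exactly once
because `c ≠ c_w`. Around `u`, the colours `φ(v) ≠ φ(w)` both occur once. The three neighbours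
of `v` cannot all share a colour since `c ≠ φ(w)`, and among three colours that are not all
equal one occurs exactly once.
-/

theorem Finset.exists_eq_triple_of_card_eq_three {α : Type*} [DecidableEq α] {s : Finset α}
    {a b : α} (hs : s.card = 3) (ha : a ∈ s) (hb : b ∈ s) (hab : a ≠ b) :
    ∃ x, s = {a, b, x} := by
  have hb' : b ∈ s.erase a := Finset.mem_erase.2 ⟨hab.symm, hb⟩
  obtain ⟨x, hx⟩ := Finset.card_eq_one.1 (show ((s.erase a).erase b).card = 1 by
    rw [Finset.card_erase_of_mem hb', Finset.card_erase_of_mem ha, hs])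
  refine ⟨x, ?_⟩
  rw [← hx, Finset.insert_erase hb', Finset.insert_erase ha]

namespace SimpleGraph

variable {V : Type*} [DecidableEq V] {G : SimpleGraph V}

theorem mem_Uset_of_neighborFinset_eq_insert {ψ : V → ℕ} {z a : V} {s : Finset V}
    [Fintype (G.neighborSet z)] (hN : G.neighborFinset z = insert a s)
    (hs : ∀ y ∈ s, ψ y ≠ ψ a) : ψ a ∈ Uset G ψ z := by
  have hNz : ∀ y, G.Adj z y ↔ y = a ∨ y ∈ s := fun y => by
    rw [← mem_neighborFinset, hN, Finset.mem_insert]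
  refine ⟨a, ⟨(hNz a).2 (Or.inl rfl), rfl⟩, fun y ⟨hzy, hy⟩ => ?_⟩
  exact ((hNz y).1 hzy).resolve_right fun hys => hs y hys hy

theorem exists_mem_Uset_of_neighborFinset_eq_triple {ψ : V → ℕ} {z a b x : V}
    [Fintype (G.neighborSet z)] (hN : G.neighborFinset z = {a, b, x}) (hab : ψ a ≠ ψ b) :
    ∃ c, c ∈ Uset G ψ z := by
  by_cases hxa : ψ x = ψ a
  · refine ⟨ψ b, mem_Uset_of_neighborFinset_eq_insert (s := {a, x})
      (by rw [hN, Finset.insert_comm]) ?_⟩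
    simp only [Finset.mem_insert, Finset.mem_singleton, forall_eq_or_imp, forall_eq]
    exact ⟨hab, hxa ▸ hab⟩
  · refine ⟨ψ a, mem_Uset_of_neighborFinset_eq_insert (s := {b, x}) hN ?_⟩
    simp only [Finset.mem_insert, Finset.mem_singleton, forall_eq_or_imp, forall_eq]
    exact ⟨hab.symm, hxa⟩

variable {φ : V → ℕ} {u : V} {c : ℕ}

theorem mem_Uset_update_of_mem_Uset_delVerts {z : V} {c' : ℕ} (hz : z ≠ u)
    (h : c' ∈ Uset (delVerts G {u}) φ z) (hc : G.Adj z u → c ≠ c') :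
    c' ∈ Uset G (Function.update φ u c) z := by
  obtain ⟨y, ⟨hzy, hy⟩, huniq⟩ := h
  refine ⟨y, ⟨hzy.1, by rwa [Function.update_of_ne hzy.2.2]⟩, fun y' ⟨hzy', hy'⟩ => ?_⟩
  by_cases hy'u : y' = u
  · subst hy'u
    exact absurd (by simpa using hy') (hc hzy')
  · exact huniq y' ⟨⟨hzy', hz, hy'u⟩, by rwa [Function.update_of_ne hy'u] at hy'⟩

theorem isPCF_update_of_delVerts (hφ : IsPCF (delVerts G {u}) φ)
    (hproper : ∀ y, G.Adj u y → c ≠ φ y)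
    (hlocal : ∀ z, z = u ∨ G.Adj u z → ∃ c', c' ∈ Uset G (Function.update φ u c) z) :
    IsPCF G (Function.update φ u c) := by
  constructor
  · intro a b hab
    by_cases ha : a = u
    · subst ha
      simpa [Function.update_of_ne hab.ne.symm] using hproper b hab
    by_cases hb : b = u
    · subst hb
      simpa [Function.update_of_ne ha] using (hproper a hab.symm).symm
    · simpa [Function.update_of_ne ha, Function.update_of_ne hb] using hφ.1 ⟨hab, ha, hb⟩
  · intro z ⟨y, hzy⟩
    by_cases hz : z = u ∨ G.Adj u z
    · exact hlocal z hz
    rw [not_or] at hz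
    have hyu : y ≠ u := by rintro rfl; exact hz.2 hzy.symm
    obtain ⟨c', hc'⟩ := hφ.2 z ⟨y, hzy, hz.1, hyu⟩
    exact ⟨c', mem_Uset_update_of_mem_Uset_delVerts hz.1 hc' fun h => absurd h.symm hz.2⟩

end SimpleGraph

open SimpleGraph

theorem stmt10_general {V : Type*} [Fintype V] (G : SimpleGraph V)
    [DecidableRel G.Adj] (u v w : V) (L : V → Finset ℕ) (φ : V → ℕ)
    (huv : G.Adj u v) (huw : G.Adj u w) (hvw : G.Adj v w)
    (hdu : G.degree u = 2) (hdv : G.degree v = 3)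
    (hL : ∀ z, (L z).card = G.degree z + 2)
    (hφ : IsPCF (delVerts G {u}) φ)
    (hφL : ∀ z, z ≠ u → φ z ∈ L z)
    (hwiso : ∃ z, (delVerts G {u}).Adj w z) :
    ∃ ψ : V → ℕ, (∀ z, z ≠ u → ψ z = φ z) ∧ IsPCFList G L ψ := by
  classical
  have hφvw : φ v ≠ φ w := hφ.1 ⟨hvw, huv.ne.symm, huw.ne.symm⟩
  obtain ⟨cw, hw⟩ := hφ.2 w hwiso
  obtain ⟨c, hcL, hc⟩ : ∃ c ∈ L u, c ∉ ({φ v, φ w, cw} : Finset ℕ) :=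
    Finset.exists_mem_notMem_of_card_lt_card
      (Finset.card_le_three.trans_lt (by rw [hL u, hdu]; omega))
  simp only [Finset.mem_insert, Finset.mem_singleton, not_or] at hc
  obtain ⟨hcv, hcw, hccw⟩ := hc
  have hNu : G.neighborFinset u = {v, w} :=
    (Finset.eq_of_subset_of_card_le (by simp [Finset.insert_subset_iff, huv, huw])
      (by rw [card_neighborFinset_eq_degree, hdu, Finset.card_pair hvw.ne])).symm
  obtain ⟨x, hNv⟩ := Finset.exists_eq_triple_of_card_eq_three
    (by rwa [card_neighborFinset_eq_degree]) (G.mem_neighborFinset v u |>.2 huv.symm)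
    (G.mem_neighborFinset v w |>.2 hvw) huw.ne
  have hAdjU : ∀ z, G.Adj u z → z = v ∨ z = w := fun z hz => by
    simpa [hNu] using (G.mem_neighborFinset u z).2 hz
  refine ⟨Function.update φ u c, fun z hz => Function.update_of_ne hz c φ,
    fun z => ?_, isPCF_update_of_delVerts hφ ?_ ?_⟩
  · by_cases hz : z = u
    · subst hz; simpa using hcL
    · simpa [Function.update_of_ne hz] using hφL z hz
  · rintro y hy
    rcases hAdjU y hy with rfl | rfl <;> assumption
  · rintro z (hzu | hz)
    · rw [hzu]
      exact ⟨_, mem_Uset_of_neighborFinset_eq_insert (s := {w}) hNu (by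
        simpa [Function.update_of_ne huv.ne.symm, Function.update_of_ne huw.ne.symm] using
          hφvw.symm)⟩
    rcases hAdjU z hz with rfl | rfl
    · exact exists_mem_Uset_of_neighborFinset_eq_triple hNv (by
        simpa [Function.update_of_ne huw.ne.symm] using hcw)
    · exact ⟨cw, mem_Uset_update_of_mem_Uset_delVerts huw.ne.symm hw fun _ => hccw⟩

/-- A triangle `u–v–w` with `d(u) = 2` and `d(v) = 3`: any PCF coloring of `G - u`
extends to a PCF coloring of `G` from lists of size degree + 2, provided `w` is not
isolated in `G - u`. -/
theorem stmt10 {V : Type*} [Fintype V] [DecidableEq V] (G : SimpleGraph V)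
    [DecidableRel G.Adj] (u v w : V) (L : V → Finset ℕ) (φ : V → ℕ)
    (huv : G.Adj u v) (huw : G.Adj u w) (hvw : G.Adj v w)
    (hdu : G.degree u = 2) (hdv : G.degree v = 3)
    (hL : ∀ z, (L z).card = G.degree z + 2)
    (hφ : IsPCF (delVerts G {u}) φ)
    (hφL : ∀ z, z ≠ u → φ z ∈ L z)
    (hwiso : ∃ z, (delVerts G {u}).Adj w z) :
    ∃ ψ : V → ℕ, (∀ z, z ≠ u → ψ z = φ z) ∧ IsPCFList G L ψ :=
  stmt10_general G u v w L φ huv huw hvw hdu hdv hL hφ hφL hwiso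
end

section
/- Let G be a graph containing a triangle u–x–y with d(u) = 2, let L be a list assignment with |L(z)| = d(z) + 2 for all z, and let φ be a proper conflict-free L-coloring of G − u. If |U_φ(x, G−u)| ≥ 3 or |U_φ(y, G−u)| ≥ 3, or |L(u)| > 4, or L(u) ≠ {φ(x), φ(y), α, β} where U_φ(x,G−u) = {α} and U_φ(y,G−u) = {β}, then φ extends to a proper conflict-free L-coloring of G by coloring only u. -/
/-!
Colour `u` with any `c ∈ L(u)` that avoids `φ(x)`, `φ(y)` and does not destroy the unique colour
of `x` or of `y`. Since `φ(x) ≠ φ(y)`, both colours are unique around `u`, and every other vertex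
keeps its neighbourhood. Each of `x`, `y` has some unique colour, so at most four colours of
`L(u)` are forbidden, and four are forbidden only when `U(x) = {α}`, `U(y) = {β}` and
`L(u) = {φ(x), φ(y), α, β}`.
-/

section Extension

variable {V : Type*} [DecidableEq V] {G : SimpleGraph V} {u : V} {φ : V → ℕ} {c : ℕ}

theorem Uset_update_self : Uset G (Function.update φ u c) u = Uset G φ u :=
  Set.ext fun _ => existsUnique_congr fun _ =>
    and_congr_right fun h => by rw [Function.update_of_ne h.ne']

theorem mem_Uset_update_of_mem_Uset_delVerts {v : V} {a : ℕ} (hv : v ≠ u)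
    (ha : a ∈ Uset (delVerts G {u}) φ v) (hac : G.Adj v u → a ≠ c) :
    a ∈ Uset G (Function.update φ u c) v := by
  obtain ⟨w, ⟨hvw, hwa⟩, huniq⟩ := ha
  refine ⟨w, ⟨hvw.1, by rwa [Function.update_of_ne hvw.2.2]⟩, fun w' ⟨hvw', hw'a⟩ => ?_⟩
  rcases eq_or_ne w' u with rfl | hw'
  · rw [Function.update_self] at hw'a
    exact absurd hw'a.symm (hac hvw')
  · rw [Function.update_of_ne hw'] at hw'a
    exact huniq w' ⟨⟨hvw', hv, hw'⟩, hw'a⟩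

theorem isPCF_update_of_isPCF_delVerts (hφ : IsPCF (delVerts G {u}) φ)
    (hproper : ∀ w, G.Adj u w → φ w ≠ c)
    (hkeep : ∀ w, G.Adj u w → ∃ a ∈ Uset (delVerts G {u}) φ w, a ≠ c)
    (hu : (Uset G φ u).Nonempty) :
    IsPCF G (Function.update φ u c) := by
  refine ⟨fun a b hab => ?_, fun v ⟨w, hvw⟩ => ?_⟩
  · rcases eq_or_ne a u with rfl | ha
    · rw [Function.update_self, Function.update_of_ne hab.ne']
      exact (hproper b hab).symm
    rcases eq_or_ne b u with rfl | hb
    · rw [Function.update_self, Function.update_of_ne hab.ne]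
      exact hproper a hab.symm
    rw [Function.update_of_ne ha, Function.update_of_ne hb]
    exact hφ.1 ⟨hab, ha, hb⟩
  · rcases eq_or_ne v u with rfl | hv
    · rwa [← Uset_update_self] at hu
    by_cases hvu : G.Adj v u
    · obtain ⟨a, ha, hac⟩ := hkeep v hvu.symm
      exact ⟨a, mem_Uset_update_of_mem_Uset_delVerts hv ha fun _ => hac⟩
    · obtain ⟨a, ha⟩ := hφ.2 v ⟨w, hvw, hv, fun h => hvu (h ▸ hvw)⟩
      exact ⟨a, mem_Uset_update_of_mem_Uset_delVerts hv ha fun h => absurd h hvu⟩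

end Extension

theorem SimpleGraph.adj_iff_of_degree_eq_two {V : Type*} [Fintype V] [DecidableEq V]
    {G : SimpleGraph V} [DecidableRel G.Adj] {u x y : V} (hux : G.Adj u x) (huy : G.Adj u y)
    (hxy : x ≠ y) (hdu : G.degree u = 2) (w : V) : G.Adj u w ↔ w = x ∨ w = y := by
  have hN : G.neighborFinset u = {x, y} :=
    (Finset.eq_of_subset_of_card_le (by simp [Finset.insert_subset_iff, hux, huy])
      (by rw [G.card_neighborFinset_eq_degree, hdu, Finset.card_pair hxy])).symm
  rw [← G.mem_neighborFinset, hN, Finset.mem_insert, Finset.mem_singleton]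

theorem exists_mem_avoiding_of_not_eq_insert (L : Finset ℕ) (p q : ℕ) {A B : Set ℕ}
    (hA : A.Nonempty) (hB : B.Nonempty) (hL : 4 ≤ L.card)
    (hex : ¬ ∃ α β : ℕ, A = {α} ∧ B = {β} ∧ L = {p, q, α, β}) :
    ∃ c ∈ L, c ≠ p ∧ c ≠ q ∧ (∃ a ∈ A, a ≠ c) ∧ ∃ b ∈ B, b ≠ c := by
  rcases hB.exists_eq_singleton_or_nontrivial with ⟨β, rfl⟩ | hB
  · rcases hA.exists_eq_singleton_or_nontrivial with ⟨α, rfl⟩ | hA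
    · obtain ⟨c, hcL, hc⟩ : ∃ c ∈ L, c ∉ ({p, q, α, β} : Finset ℕ) :=
        Finset.not_subset.1 fun hsub => hex ⟨α, β, rfl, rfl,
          Finset.eq_of_subset_of_card_le hsub (Finset.card_le_four.trans hL)⟩
      simp only [Finset.mem_insert, Finset.mem_singleton, not_or] at hc
      exact ⟨c, hcL, hc.1, hc.2.1, ⟨α, rfl, Ne.symm hc.2.2.1⟩, β, rfl, Ne.symm hc.2.2.2⟩
    · obtain ⟨c, hcL, hc⟩ := Finset.exists_mem_notMem_of_card_lt_card
        ((Finset.card_le_three (a := p) (b := q) (c := β)).trans_lt hL)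
      simp only [Finset.mem_insert, Finset.mem_singleton, not_or] at hc
      exact ⟨c, hcL, hc.1, hc.2.1, hA.exists_ne c, β, rfl, Ne.symm hc.2.2⟩
  · obtain ⟨α, hα⟩ := hA
    obtain ⟨c, hcL, hc⟩ := Finset.exists_mem_notMem_of_card_lt_card
      ((Finset.card_le_three (a := p) (b := q) (c := α)).trans_lt hL)
    simp only [Finset.mem_insert, Finset.mem_singleton, not_or] at hc
    exact ⟨c, hcL, hc.1, hc.2.1, ⟨α, hα, Ne.symm hc.2.2⟩, hB.exists_ne c⟩

/-- A triangle `u–x–y` with `d(u) = 2`: a PCF coloring `φ` of `G - u` extends to `G`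
by coloring only `u`, provided one of the following holds: `x` or `y` has at least 3
uniquely-occurring colors in `G - u`, or `|L(u)| > 4`, or `L(u)` is not the set
`{φ(x), φ(y), α, β}` where `α`, `β` are the unique once-appearing colors at `x`, `y`. -/
theorem stmt11 {V : Type*} [Fintype V] [DecidableEq V] (G : SimpleGraph V)
    [DecidableRel G.Adj] (u x y : V) (L : V → Finset ℕ) (φ : V → ℕ)
    (hux : G.Adj u x) (huy : G.Adj u y) (hxy : G.Adj x y)
    (hdu : G.degree u = 2)
    (hL : ∀ z, (L z).card = G.degree z + 2)
    (hφ : IsPCF (delVerts G {u}) φ)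
    (hφL : ∀ z, z ≠ u → φ z ∈ L z)
    (hxiso : ∃ z, (delVerts G {u}).Adj x z)
    (hyiso : ∃ z, (delVerts G {u}).Adj y z)
    (hcase :
      (∃ a b c : ℕ, a ≠ b ∧ a ≠ c ∧ b ≠ c ∧
        a ∈ Uset (delVerts G {u}) φ x ∧ b ∈ Uset (delVerts G {u}) φ x ∧
        c ∈ Uset (delVerts G {u}) φ x) ∨
      (∃ a b c : ℕ, a ≠ b ∧ a ≠ c ∧ b ≠ c ∧
        a ∈ Uset (delVerts G {u}) φ y ∧ b ∈ Uset (delVerts G {u}) φ y ∧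
        c ∈ Uset (delVerts G {u}) φ y) ∨
      4 < (L u).card ∨
      ¬ (∃ α β : ℕ,
          Uset (delVerts G {u}) φ x = {α} ∧
          Uset (delVerts G {u}) φ y = {β} ∧
          L u = {φ x, φ y, α, β})) :
    ∃ c ∈ L u, IsPCFList G L (Function.update φ u c) := by
  have hLu : (L u).card = 4 := by rw [hL, hdu]
  have hN := G.adj_iff_of_degree_eq_two hux huy hxy.ne hdu
  have hφxy : φ x ≠ φ y := hφ.1 ⟨hxy, hux.ne', huy.ne'⟩
  have hex : ¬ ∃ α β : ℕ, Uset (delVerts G {u}) φ x = {α} ∧ Uset (delVerts G {u}) φ y = {β} ∧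
      L u = {φ x, φ y, α, β} := by
    rcases hcase with ⟨a, b, -, hab, -, -, ha, hb, -⟩ | ⟨a, b, -, hab, -, -, ha, hb, -⟩ | h4 | h
    · rintro ⟨α, β, hα, -, -⟩
      rw [hα] at ha hb
      exact hab (ha.trans hb.symm)
    · rintro ⟨α, β, -, hβ, -⟩
      rw [hβ] at ha hb
      exact hab (ha.trans hb.symm)
    · omega
    · exact h
  obtain ⟨c, hcL, hcx, hcy, hax, hby⟩ := exists_mem_avoiding_of_not_eq_insert (L u) (φ x) (φ y)
    (hφ.2 x hxiso) (hφ.2 y hyiso) hLu.ge hex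
  refine ⟨c, hcL, fun v => ?_, isPCF_update_of_isPCF_delVerts hφ (fun w hw => ?_)
    (fun w hw => ?_) ⟨φ x, x, ⟨hux, rfl⟩, fun w ⟨hw, hwx⟩ => ?_⟩⟩
  · rcases eq_or_ne v u with rfl | hv
    · rwa [Function.update_self]
    · rw [Function.update_of_ne hv]
      exact hφL v hv
  · rcases (hN w).1 hw with rfl | rfl
    exacts [hcx.symm, hcy.symm]
  · rcases (hN w).1 hw with rfl | rfl
    exacts [hax, hby]
  · exact ((hN w).1 hw).resolve_right fun hwy => hφxy (hwy ▸ hwx).symm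
end

section
/- Let G be a graph of maximum degree at most 4 containing a path x–u–v–y with d(u) = d(v) = 3 and with additional edges uy and xv (so u and v are each adjacent to both x and y). Let L be a list assignment with |L(z)| = d(z) + 2 for all z, and suppose G − v has a proper conflict-free L-coloring φ with φ(x) ≠ φ(y). If L(v) ≠ {φ(x), φ(y), φ(u), α, β}, where α ∈ U_φ(x, G−v) and β ∈ U_φ(y, G−v), then φ extends to G by coloring v with a color outside this 5-element set. -/
open Function

theorem Finset.exists_mem_notMem_of_card_le_of_ne {α : Type*} {s t : Finset α}
    (hcard : s.card ≤ t.card) (hne : t ≠ s) : ∃ a ∈ t, a ∉ s := by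
  by_contra! hsub
  exact hne (Finset.eq_of_subset_of_card_le hsub hcard)

theorem SimpleGraph.eq_or_eq_or_eq_of_adj_of_degree_eq_three {V : Type*} {G : SimpleGraph V}
    {v a b c z : V} [Fintype (G.neighborSet v)] (hdeg : G.degree v = 3)
    (ha : G.Adj v a) (hb : G.Adj v b) (hc : G.Adj v c)
    (hab : a ≠ b) (hac : a ≠ c) (hbc : b ≠ c) (hz : G.Adj v z) : z = a ∨ z = b ∨ z = c := by
  classical
  have hcard : ({a, b, c} : Finset V).card = 3 :=
    Finset.card_eq_three.2 ⟨a, b, c, hab, hac, hbc, rfl⟩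
  have hN : G.neighborFinset v = {a, b, c} :=
    (Finset.eq_of_subset_of_card_le (by simp [Finset.insert_subset_iff, ha, hb, hc])
      (by rw [card_neighborFinset_eq_degree, hdeg, hcard])).symm
  simpa [hN] using (G.mem_neighborFinset v z).2 hz

section Extension

variable {V : Type*} {G : SimpleGraph V} {φ : V → ℕ} {v w : V} {c : ℕ}

theorem exists_mem_Uset_of_adj_imp_eq_or_eq_or_eq {x u y : V}
    (hN : ∀ z, G.Adj w z → z = x ∨ z = u ∨ z = y) (hx : G.Adj w x) (hy : G.Adj w y)
    (hxy : φ x ≠ φ y) : ∃ a, a ∈ Uset G φ w := by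
  by_cases hux : φ u = φ x
  · refine ⟨φ y, y, ⟨hy, rfl⟩, fun z ⟨hz, hzc⟩ => ?_⟩
    rcases hN z hz with rfl | rfl | rfl
    · exact absurd hzc hxy
    · exact absurd (hux ▸ hzc) hxy
    · rfl
  · refine ⟨φ x, x, ⟨hx, rfl⟩, fun z ⟨hz, hzc⟩ => ?_⟩
    rcases hN z hz with rfl | rfl | rfl
    · rfl
    · exact absurd hzc hux
    · exact absurd hzc.symm hxy

variable [DecidableEq V]

theorem mem_Uset_update_of_mem_Uset_delVerts_s18 {c' : ℕ} (hwv : w ≠ v)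
    (hc' : c' ∈ Uset (delVerts G {v}) φ w) (hcc' : G.Adj w v → c ≠ c') :
    c' ∈ Uset G (update φ v c) w := by
  obtain ⟨w₀, ⟨⟨hadj, -, hw₀v⟩, hcol⟩, huniq⟩ := hc'
  refine ⟨w₀, ⟨hadj, by rwa [update_of_ne hw₀v]⟩, fun z ⟨hz, hzc⟩ => ?_⟩
  rcases eq_or_ne z v with rfl | hzv
  · exact absurd (by rwa [update_self] at hzc) (hcc' hz)
  · exact huniq z ⟨⟨hz, hwv, hzv⟩, by rwa [update_of_ne hzv] at hzc⟩

theorem mem_Uset_update_self (hwv : G.Adj w v) (hc : ∀ z, G.Adj w z → z ≠ v → φ z ≠ c) :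
    c ∈ Uset G (update φ v c) w := by
  refine ⟨v, ⟨hwv, update_self v c φ⟩, fun z ⟨hz, hzc⟩ => ?_⟩
  by_contra hzv
  exact hc z hz hzv (by rwa [update_of_ne hzv] at hzc)

theorem IsPCF.update_of_delVerts (hφ : IsPCF (delVerts G {v}) φ)
    (hproper : ∀ z, G.Adj v z → φ z ≠ c) (hv : ∃ a, a ∈ Uset G (update φ v c) v)
    (hN : ∀ w, G.Adj v w → ∃ a, a ∈ Uset G (update φ v c) w) :
    IsPCF G (update φ v c) := by
  constructor
  · intro a b hab
    rcases eq_or_ne a v with rfl | ha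
    · rw [update_self, update_of_ne (G.ne_of_adj hab).symm]
      exact (hproper b hab).symm
    rcases eq_or_ne b v with rfl | hb
    · rw [update_self, update_of_ne ha]
      exact hproper a hab.symm
    rw [update_of_ne ha, update_of_ne hb]
    exact hφ.1 ⟨hab, ha, hb⟩
  · rintro w ⟨w₁, hw₁⟩
    rcases eq_or_ne w v with rfl | hwv
    · exact hv
    by_cases hvw : G.Adj v w
    · exact hN w hvw
    have hw₁v : w₁ ≠ v := by rintro rfl; exact hvw hw₁.symm
    obtain ⟨c', hc'⟩ := hφ.2 w ⟨w₁, hw₁, hwv, hw₁v⟩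
    exact ⟨c', mem_Uset_update_of_mem_Uset_delVerts_s18 hwv hc' fun h => absurd h.symm hvw⟩

end Extension

theorem stmt18_general {V : Type*} [Fintype V] [DecidableEq V] (G : SimpleGraph V)
    [DecidableRel G.Adj] (x u v y : V) (L : V → Finset ℕ) (φ : V → ℕ)
    (hxu : G.Adj x u) (huv : G.Adj u v) (hvy : G.Adj v y)
    (huy : G.Adj u y) (hxv : G.Adj x v) (hxy : x ≠ y)
    (hdu : G.degree u = 3) (hdv : G.degree v = 3)
    (hL : ∀ z, (L z).card = G.degree z + 2)
    (hφ : IsPCF (delVerts G {v}) φ)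
    (hφL : ∀ z, z ≠ v → φ z ∈ L z)
    (hne : φ x ≠ φ y) :
    ∀ α β : ℕ, α ∈ Uset (delVerts G {v}) φ x → β ∈ Uset (delVerts G {v}) φ y →
      L v ≠ {φ x, φ y, φ u, α, β} →
      ∃ c ∈ L v, c ∉ ({φ x, φ y, φ u, α, β} : Finset ℕ) ∧
        IsPCFList G L (Function.update φ v c) := by
  intro α β hα hβ hLne
  have hxv' := G.ne_of_adj hxv
  have hvy' := G.ne_of_adj hvy
  have hNv := fun z => G.eq_or_eq_or_eq_of_adj_of_degree_eq_three (z := z) hdv hxv.symm huv.symm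
    hvy (G.ne_of_adj hxu) hxy (G.ne_of_adj huy)
  have hNu := fun z => G.eq_or_eq_or_eq_of_adj_of_degree_eq_three (z := z) hdu hxu.symm huv huy
    hxv' hxy hvy'
  obtain ⟨c, hcL, hcS⟩ := Finset.exists_mem_notMem_of_card_le_of_ne
    (by rw [hL, hdv]; exact Finset.card_le_five) hLne
  have hc := hcS
  simp only [Finset.mem_insert, Finset.mem_singleton, not_or] at hc
  obtain ⟨hcx, hcy, hcu, hcα, hcβ⟩ := hc
  refine ⟨c, hcL, hcS, (forall_update_iff φ fun z d => d ∈ L z).2 ⟨hcL, hφL⟩,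
    hφ.update_of_delVerts ?_ ?_ ?_⟩
  · intro z hz
    rcases hNv z hz with rfl | rfl | rfl
    exacts [Ne.symm hcx, Ne.symm hcu, Ne.symm hcy]
  · refine exists_mem_Uset_of_adj_imp_eq_or_eq_or_eq hNv hxv.symm hvy ?_
    rwa [update_of_ne hxv', update_of_ne hvy'.symm]
  · intro w hw
    rcases hNv w hw with rfl | rfl | rfl
    · exact ⟨α, mem_Uset_update_of_mem_Uset_delVerts_s18 hxv' hα fun _ => hcα⟩
    · refine ⟨c, mem_Uset_update_self huv fun z hz hzv => ?_⟩
      rcases hNu z hz with rfl | rfl | rfl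
      exacts [Ne.symm hcx, absurd rfl hzv, Ne.symm hcy]
    · exact ⟨β, mem_Uset_update_of_mem_Uset_delVerts_s18 hvy'.symm hβ fun _ => hcβ⟩

/-- Configuration `T₁₄`: a path `x–u–v–y` with `d(u) = d(v) = 3` and additional edges
`u–y`, `x–v`, in a graph of maximum degree at most 4. A PCF coloring `φ` of `G - v`
with `φ(x) ≠ φ(y)` extends by coloring `v` outside `{φ(x), φ(y), φ(u), α, β}`,
whenever `L(v)` is not equal to that 5-element set, where `α` (resp. `β`) is a
uniquely-occurring color at `x` (resp. `y`) in `G - v`. -/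
theorem stmt18 {V : Type*} [Fintype V] [DecidableEq V] (G : SimpleGraph V)
    [DecidableRel G.Adj] (x u v y : V) (L : V → Finset ℕ) (φ : V → ℕ)
    (hΔ : G.maxDegree ≤ 4)
    (hxu : G.Adj x u) (huv : G.Adj u v) (hvy : G.Adj v y)
    (huy : G.Adj u y) (hxv : G.Adj x v) (hxy : x ≠ y)
    (hdu : G.degree u = 3) (hdv : G.degree v = 3)
    (hL : ∀ z, (L z).card = G.degree z + 2)
    (hφ : IsPCF (delVerts G {v}) φ)
    (hφL : ∀ z, z ≠ v → φ z ∈ L z)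
    (hne : φ x ≠ φ y) :
    ∀ α β : ℕ, α ∈ Uset (delVerts G {v}) φ x → β ∈ Uset (delVerts G {v}) φ y →
      L v ≠ {φ x, φ y, φ u, α, β} →
      ∃ c ∈ L v, c ∉ ({φ x, φ y, φ u, α, β} : Finset ℕ) ∧
        IsPCFList G L (Function.update φ v c) :=
  stmt18_general G x u v y L φ hxu huv hvy huy hxv hxy hdu hdv hL hφ hφL hne
end
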